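/- arXiv:1606.01424 — 6 statements merged into one kernel-verified Lean document; each statement's English description precedes it below -/
import Mathlib

section
/- Let θ_0 = 1, θ_i = (1 + √(1 + 4θ_{i-1}²))/2 for 1 ≤ i ≤ N−1, and θ_N = (1 + √(1 + 8θ_{N-1}²))/2. Then θ_N / N converges to √2/2 as N → ∞ (equivalently, θ_N = (√2/2)N + o(N)). -/
open Filter Topology Finset

/-!
Since `√(1 + y²) - y → 0` as `y → ∞`, each step of the recursion adds `1/2 + o(1)` to `θ`, so
`θ → ∞` and `θ (n + 1) - θ n → 1/2`; in the same way `T (n + 1) - √2 θ n → 1/2`. Hence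
`T (n + 1) - T n → √2 / 2`, and Stolz–Cesàro turns this into `T N / N → √2 / 2`.
-/

theorem tendsto_div_natCast_of_tendsto_sub {u : ℕ → ℝ} {l : ℝ}
    (h : Tendsto (fun n => u (n + 1) - u n) atTop (𝓝 l)) :
    Tendsto (fun n : ℕ => u n / n) atTop (𝓝 l) := by
  have hsplit : (fun n : ℕ => u n / n) =
      fun n : ℕ => u 0 / n + (n⁻¹ : ℝ) * ∑ i ∈ range n, (u (i + 1) - u i) := by
    ext n
    rw [sum_range_sub]
    ring
  rw [hsplit, ← zero_add l]
  exact (tendsto_const_div_atTop_nhds_zero_nat (u 0)).add h.cesaro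

theorem tendsto_atTop_of_add_le_succ {u : ℕ → ℝ} {c : ℝ} (hc : 0 < c)
    (h : ∀ n, u n + c ≤ u (n + 1)) : Tendsto u atTop atTop := by
  have hlin : ∀ n : ℕ, u 0 + n * c ≤ u n := by
    intro n
    induction n with
    | zero => simp
    | succ n ih => push_cast; linarith [h n]
  exact tendsto_atTop_mono hlin
    (tendsto_atTop_add_const_left _ _ (tendsto_natCast_atTop_atTop.atTop_mul_const hc))

theorem tendsto_sqrt_one_add_sq_sub_self :
    Tendsto (fun y : ℝ => √(1 + y ^ 2) - y) atTop (𝓝 0) := by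
  refine tendsto_of_tendsto_of_tendsto_of_le_of_le' tendsto_const_nhds tendsto_inv_atTop_zero
    ?_ ?_ <;> filter_upwards [eventually_gt_atTop 0] with y hy
  · have : y ≤ √(1 + y ^ 2) := (Real.le_sqrt hy.le (by positivity)).2 (by linarith)
    linarith
  · have hinv := mul_inv_cancel₀ hy.ne'
    have : √(1 + y ^ 2) ≤ y + y⁻¹ :=
      (Real.sqrt_le_left (by positivity)).2 (by nlinarith [sq_nonneg y⁻¹])
    linarith

theorem tendsto_half_one_add_sqrt_sub {a : ℝ} (ha : 0 < a) :
    Tendsto (fun x : ℝ => (1 + √(1 + a * x ^ 2)) / 2 - √a / 2 * x) atTop (𝓝 (1 / 2)) := by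
  have hlim := ((tendsto_sqrt_one_add_sq_sub_self.comp
    (tendsto_id.const_mul_atTop (Real.sqrt_pos.2 ha))).div_const 2).const_add (1 / 2)
  rw [zero_div, add_zero] at hlim
  refine hlim.congr fun x => ?_
  simp only [Function.comp_apply, id, mul_pow, Real.sq_sqrt ha.le]
  ring

theorem add_half_le_half_one_add_sqrt (x : ℝ) : x + 1 / 2 ≤ (1 + √(1 + 4 * x ^ 2)) / 2 := by
  have : 2 * x ≤ √(1 + 4 * x ^ 2) :=
    (le_abs_self _).trans (Real.abs_le_sqrt (by nlinarith))
  linarith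

theorem theta_asymptotics_general (θ : ℕ → ℝ) (T : ℕ → ℝ)
    (hrec : ∀ i : ℕ, 1 ≤ i → θ i = (1 + Real.sqrt (1 + 4 * θ (i - 1) ^ 2)) / 2)
    (hT : ∀ N : ℕ, 1 ≤ N → T N = (1 + Real.sqrt (1 + 8 * θ (N - 1) ^ 2)) / 2) :
    Filter.Tendsto (fun N : ℕ => T N / (N : ℝ)) Filter.atTop (nhds (Real.sqrt 2 / 2)) := by
  have hθ_succ (n : ℕ) : θ (n + 1) = (1 + √(1 + 4 * θ n ^ 2)) / 2 := hrec (n + 1) n.succ_pos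
  have hT_succ (n : ℕ) : T (n + 1) = (1 + √(1 + 8 * θ n ^ 2)) / 2 := hT (n + 1) n.succ_pos
  have hθ : Tendsto θ atTop atTop := tendsto_atTop_of_add_le_succ one_half_pos fun n => by
    rw [hθ_succ]
    exact add_half_le_half_one_add_sqrt (θ n)
  have hsqrt4 : √4 / 2 = (1 : ℝ) := by
    rw [show (4 : ℝ) = 2 ^ 2 by norm_num, Real.sqrt_sq zero_le_two]; norm_num
  have hsqrt8 : √8 / 2 = √2 := by
    rw [show (8 : ℝ) = 2 ^ 2 * 2 by norm_num, Real.sqrt_mul' _ zero_le_two,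
      Real.sqrt_sq zero_le_two]; ring
  have hθ_diff : Tendsto (fun n => θ (n + 1) - θ n) atTop (𝓝 (1 / 2)) := by
    simpa [Function.comp_def, hθ_succ, hsqrt4] using
      (tendsto_half_one_add_sqrt_sub four_pos).comp hθ
  have hT_gap : Tendsto (fun n => T (n + 1) - √2 * θ n) atTop (𝓝 (1 / 2)) := by
    simpa [Function.comp_def, hT_succ, hsqrt8] using
      (tendsto_half_one_add_sqrt_sub (by norm_num : (0 : ℝ) < 8)).comp hθ
  have hT_diff : Tendsto (fun n => T (n + 1) - T n) atTop (𝓝 (√2 / 2)) := by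
    refine (tendsto_add_atTop_iff_nat 1).1 ?_
    -- `T (n + 2) - T (n + 1) = gap (n + 1) - gap n + √2 (θ (n + 1) - θ n)`
    have := (((tendsto_add_atTop_iff_nat 1).2 hT_gap).sub hT_gap).add (hθ_diff.const_mul √2)
    convert this using 2 <;> ring
  exact tendsto_div_natCast_of_tendsto_sub hT_diff

theorem theta_asymptotics (θ : ℕ → ℝ) (T : ℕ → ℝ) (h0 : θ 0 = 1)
    (hrec : ∀ i : ℕ, 1 ≤ i → θ i = (1 + Real.sqrt (1 + 4 * θ (i - 1) ^ 2)) / 2)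
    (hT : ∀ N : ℕ, 1 ≤ N → T N = (1 + Real.sqrt (1 + 8 * θ (N - 1) ^ 2)) / 2) :
    Filter.Tendsto (fun N : ℕ => T N / (N : ℝ)) Filter.atTop (nhds (Real.sqrt 2 / 2)) :=
  theta_asymptotics_general θ T hrec hT
end

section
/- Let f : ℝ^d → ℝ be convex and differentiable. If f(y₂) ≤ f(y₁) + ⟨∇f(y₁), y₂ − y₁⟩ + (L/2)‖y₁ − y₂‖² for all y₁, y₂ ∈ ℝ^d, then ∇f is L-Lipschitz continuous. -/
/-!
Convexity gives the tangent lower bound `f x + ⟪∇f x, y - x⟫ ≤ f y`. Chaining it at `z` with the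
quadratic upper bound at `y`, for `z = y - (∇f y - ∇f x) / L`, sharpens it by
`‖∇f y - ∇f x‖² / (2L)`. Adding the sharpened bound for `(x, y)` and `(y, x)` gives co-coercivity
`‖∇f x - ∇f y‖² ≤ L ⟪∇f x - ∇f y, x - y⟫`, and Cauchy–Schwarz turns this into the Lipschitz bound.
-/

open RealInnerProductSpace Set

theorem ConvexOn.add_fderiv_sub_le {E : Type*} [NormedAddCommGroup E] [NormedSpace ℝ E]
    {s : Set E} {f : E → ℝ} (hf : ConvexOn ℝ s f) {x y : E} (hx : x ∈ s) (hy : y ∈ s)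
    (hfx : DifferentiableAt ℝ f x) :
    f x + fderiv ℝ f x (y - x) ≤ f y := by
  have hseg : ConvexOn ℝ (Icc (0 : ℝ) 1) (f ∘ AffineMap.lineMap x y) :=
    (hf.comp_affineMap _).subset (fun t ht => hf.1.lineMap_mem hx hy ht) (convex_Icc 0 1)
  have hderiv : HasDerivAt (f ∘ AffineMap.lineMap x y) (fderiv ℝ f x (y - x)) (0 : ℝ) := by
    have hfx' : HasFDerivAt f (fderiv ℝ f x) (AffineMap.lineMap x y (0 : ℝ)) := by
      simpa using hfx.hasFDerivAt
    exact hfx'.comp_hasDerivAt 0 AffineMap.hasDerivAt_lineMap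
  have hslope := hseg.le_slope_of_hasDerivAt (by simp) (by simp) one_pos hderiv
  simp only [slope, sub_zero, inv_one, one_smul, Function.comp_apply,
    AffineMap.lineMap_apply_one, AffineMap.lineMap_apply_zero, vsub_eq_sub] at hslope
  linarith

section InnerProductSpace

variable {E : Type*} [NormedAddCommGroup E] [InnerProductSpace ℝ E]

theorem ConvexOn.add_inner_gradient_sub_le [CompleteSpace E] {s : Set E} {f : E → ℝ}
    (hf : ConvexOn ℝ s f) {x y : E} (hx : x ∈ s) (hy : y ∈ s) (hfx : DifferentiableAt ℝ f x) :
    f x + ⟪gradient f x, y - x⟫ ≤ f y := by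
  rw [inner_gradient_left]
  exact hf.add_fderiv_sub_le hx hy hfx

variable {f : E → ℝ} {g : E → E} {L : ℝ}

theorem add_inner_sub_add_norm_sub_sq_div_le (hL : 0 < L)
    (hlow : ∀ x y, f x + ⟪g x, y - x⟫ ≤ f y)
    (hup : ∀ x y, f y ≤ f x + ⟪g x, y - x⟫ + L / 2 * ‖x - y‖ ^ 2) (x y : E) :
    f x + ⟪g x, y - x⟫ + ‖g y - g x‖ ^ 2 / (2 * L) ≤ f y := by
  set w := g y - g x
  set z := y - L⁻¹ • w
  have hzx : ⟪g x, z - x⟫ = ⟪g x, y - x⟫ - L⁻¹ * ⟪g x, w⟫ := by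
    rw [show z - x = (y - x) - L⁻¹ • w by simp only [z]; abel, inner_sub_right,
      real_inner_smul_right]
  have hzy : ⟪g y, z - y⟫ = -(L⁻¹ * ⟪g y, w⟫) := by
    rw [show z - y = -(L⁻¹ • w) by simp only [z]; abel, inner_neg_right, real_inner_smul_right]
  have hyz : ‖y - z‖ ^ 2 = L⁻¹ ^ 2 * ‖w‖ ^ 2 := by
    rw [show y - z = L⁻¹ • w by simp only [z]; abel, norm_smul, mul_pow, Real.norm_eq_abs, sq_abs]
  have hw : ⟪g y, w⟫ - ⟪g x, w⟫ = ‖w‖ ^ 2 := by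
    rw [← inner_sub_left, real_inner_self_eq_norm_sq]
  have := (hlow x z).trans (hup y z)
  have hquad : L / 2 * (L⁻¹ ^ 2 * ‖w‖ ^ 2) = ‖w‖ ^ 2 / (2 * L) := by field_simp
  have hlin : L⁻¹ * ⟪g y, w⟫ - L⁻¹ * ⟪g x, w⟫ = 2 * (‖w‖ ^ 2 / (2 * L)) := by
    rw [← mul_sub, hw]; field_simp
  rw [hzx, hzy, hyz, hquad] at this
  linarith

theorem norm_sub_sq_le_mul_inner_sub (hL : 0 < L)
    (hlow : ∀ x y, f x + ⟪g x, y - x⟫ ≤ f y)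
    (hup : ∀ x y, f y ≤ f x + ⟪g x, y - x⟫ + L / 2 * ‖x - y‖ ^ 2) (x y : E) :
    ‖g x - g y‖ ^ 2 ≤ L * ⟪g x - g y, x - y⟫ := by
  have hxy := add_inner_sub_add_norm_sub_sq_div_le hL hlow hup x y
  have hyx := add_inner_sub_add_norm_sub_sq_div_le hL hlow hup y x
  rw [norm_sub_rev] at hxy
  have : ⟪g x - g y, x - y⟫ = -⟪g x, y - x⟫ - ⟪g y, x - y⟫ := by
    rw [inner_sub_left, ← neg_sub y x, inner_neg_right]
  have hdiv : ‖g x - g y‖ ^ 2 / L = 2 * (‖g x - g y‖ ^ 2 / (2 * L)) := by field_simp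
  rw [this, ← div_le_iff₀' hL, hdiv]
  linarith

theorem lipschitzWith_of_norm_sub_sq_le_mul_inner (hL : 0 ≤ L)
    (h : ∀ x y, ‖g x - g y‖ ^ 2 ≤ L * ⟪g x - g y, x - y⟫) :
    LipschitzWith L.toNNReal g := by
  refine LipschitzWith.of_dist_le_mul fun x y => ?_
  rw [dist_eq_norm, dist_eq_norm, Real.coe_toNNReal _ hL]
  have : ‖g x - g y‖ ^ 2 ≤ L * ‖x - y‖ * ‖g x - g y‖ :=
    calc ‖g x - g y‖ ^ 2 ≤ L * ⟪g x - g y, x - y⟫ := h x y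
      _ ≤ L * (‖g x - g y‖ * ‖x - y‖) := by gcongr; exact real_inner_le_norm _ _
      _ = L * ‖x - y‖ * ‖g x - g y‖ := by ring
  rcases (norm_nonneg (g x - g y)).eq_or_lt with h0 | hpos
  · rw [← h0]; positivity
  · nlinarith

end InnerProductSpace

theorem descent_implies_lipschitz_gradient (d : ℕ) (L : ℝ) (hL : 0 < L)
    (f : EuclideanSpace ℝ (Fin d) → ℝ)
    (hconv : ConvexOn ℝ Set.univ f) (hdiff : Differentiable ℝ f)
    (hdesc : ∀ y₁ y₂ : EuclideanSpace ℝ (Fin d),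
      f y₂ ≤ f y₁ + ⟪gradient f y₁, y₂ - y₁⟫ + L / 2 * ‖y₁ - y₂‖ ^ 2) :
    LipschitzWith (Real.toNNReal L) (gradient f) :=
  lipschitzWith_of_norm_sub_sq_le_mul_inner hL.le <| norm_sub_sq_le_mul_inner_sub hL
    (fun x _ => hconv.add_inner_gradient_sub_le trivial trivial (hdiff x)) hdesc
end

section
/- With x_i, g_i, f_i as in the worst-case construction (L > 0, ζ_0 > ⋯ > ζ_{N+1} > ζ_{N+2} = 0), for all 0 ≤ i, j ≤ N+1 the smooth-convex interpolation inequality (1/(2L))‖g_i − g_j‖² ≤ f_j − f_i − ⟨g_i, x_j − x_i⟩ holds. -/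
open RealInnerProductSpace

/-!
For `i ≤ N` the gradient `g i` is a multiple of the basis vector `e i`, so distinct gradients are
orthogonal and `‖g i - g j‖² = ‖g i‖² + ‖g j‖²`. The inequality then separates into
`f i + ‖g i‖² / (2L) + ⟪g i, x j - x i⟫ ≤ f j - ‖g j‖² / (2L)`, where the right side is `L ζ_{j+1}`
and the left side is `L ζ_{j+1}` when `i < j`, `L ζ_i` when `j < i ≤ N`, and `0` when `i = N + 1`;
the claim follows since `ζ` is decreasing and vanishes at `N + 2`.
-/

theorem interpolation_of_inner_eq_zero {E : Type*} [NormedAddCommGroup E] [InnerProductSpace ℝ E]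
    {L : ℝ} {gi gj d : E} {fi fj : ℝ} (horth : ⟪gi, gj⟫ = 0)
    (h : fi + ‖gi‖ ^ 2 / (2 * L) + ⟪gi, d⟫ ≤ fj - ‖gj‖ ^ 2 / (2 * L)) :
    1 / (2 * L) * ‖gi - gj‖ ^ 2 ≤ fj - fi - ⟪gi, d⟫ := by
  rw [norm_sub_sq_real, horth]
  linarith [show 1 / (2 * L) * (‖gi‖ ^ 2 - 2 * 0 + ‖gj‖ ^ 2)
    = ‖gi‖ ^ 2 / (2 * L) + ‖gj‖ ^ 2 / (2 * L) by ring]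

section WorstCase

variable {N : ℕ} {L : ℝ} {ζ : ℕ → ℝ} {x g : ℕ → EuclideanSpace ℝ (Fin (N + 1))} {fv : ℕ → ℝ}

lemma wc_antitone (hζ : ∀ i j : ℕ, i < j → j ≤ N + 2 → ζ j < ζ i) {i j : ℕ} (hij : i ≤ j)
    (hj : j ≤ N + 2) : ζ j ≤ ζ i := by
  obtain rfl | hlt := eq_or_lt_of_le hij
  · rfl
  · exact (hζ i j hlt hj).le

lemma wc_nonneg (hζ : ∀ i j : ℕ, i < j → j ≤ N + 2 → ζ j < ζ i) (hζ0 : ζ (N + 2) = 0) {i : ℕ}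
    (hi : i ≤ N + 2) : 0 ≤ ζ i :=
  hζ0 ▸ wc_antitone hζ hi le_rfl

lemma wc_grad_eq_single
    (hg : ∀ i : ℕ, i ≤ N → ∀ j : Fin (N + 1),
      g i j = if (j : ℕ) = i then L * Real.sqrt (ζ i - ζ (i + 1)) else 0)
    {i : ℕ} (hi : i ≤ N) :
    g i = EuclideanSpace.single ⟨i, by omega⟩ (L * Real.sqrt (ζ i - ζ (i + 1))) := by
  ext j
  simp [hg i hi, Fin.ext_iff]

lemma wc_inner_grad_point (hζ : ∀ i j : ℕ, i < j → j ≤ N + 2 → ζ j < ζ i)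
    (hx : ∀ i : ℕ, i ≤ N + 1 → ∀ j : Fin (N + 1),
      x i j = if (j : ℕ) < i then -((ζ j - ζ (i + 1)) / Real.sqrt (ζ j - ζ (j + 1))) else 0)
    (hg : ∀ i : ℕ, i ≤ N → ∀ j : Fin (N + 1),
      g i j = if (j : ℕ) = i then L * Real.sqrt (ζ i - ζ (i + 1)) else 0)
    {i j : ℕ} (hi : i ≤ N) (hj : j ≤ N + 1) :
    ⟪g i, x j⟫ = if i < j then -(L * (ζ i - ζ (j + 1))) else 0 := by
  have hsqrt : Real.sqrt (ζ i - ζ (i + 1)) ≠ 0 :=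
    (Real.sqrt_pos.mpr (sub_pos.mpr (hζ i (i + 1) (by omega) (by omega)))).ne'
  rw [wc_grad_eq_single hg hi, EuclideanSpace.inner_single_left, hx j hj]
  split_ifs <;> simp only [conj_trivial, mul_zero]
  field_simp

lemma wc_inner_grad_grad
    (hg : ∀ i : ℕ, i ≤ N → ∀ j : Fin (N + 1),
      g i j = if (j : ℕ) = i then L * Real.sqrt (ζ i - ζ (i + 1)) else 0)
    (hgN : g (N + 1) = 0) {i j : ℕ} (hi : i ≤ N + 1) (hj : j ≤ N + 1) (hij : i ≠ j) :
    ⟪g i, g j⟫ = 0 := by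
  obtain rfl | hi := eq_or_lt_of_le hi
  · rw [hgN, inner_zero_left]
  obtain rfl | hj := eq_or_lt_of_le hj
  · rw [hgN, inner_zero_right]
  rw [wc_grad_eq_single hg (by omega), wc_grad_eq_single hg (by omega),
    EuclideanSpace.inner_single_left, PiLp.single_apply]
  simp [Fin.ext_iff, hij]

lemma wc_norm_sq_grad (hζ : ∀ i j : ℕ, i < j → j ≤ N + 2 → ζ j < ζ i)
    (hg : ∀ i : ℕ, i ≤ N → ∀ j : Fin (N + 1),
      g i j = if (j : ℕ) = i then L * Real.sqrt (ζ i - ζ (i + 1)) else 0)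
    {i : ℕ} (hi : i ≤ N) : ‖g i‖ ^ 2 = L ^ 2 * (ζ i - ζ (i + 1)) := by
  rw [wc_grad_eq_single hg hi, PiLp.norm_single, Real.norm_eq_abs, sq_abs, mul_pow,
    Real.sq_sqrt (sub_nonneg.mpr (wc_antitone hζ (Nat.le_succ i) (by omega)))]

lemma wc_value_add_norm_sq (hL : 0 < L) (hζ : ∀ i j : ℕ, i < j → j ≤ N + 2 → ζ j < ζ i)
    (hg : ∀ i : ℕ, i ≤ N → ∀ j : Fin (N + 1),
      g i j = if (j : ℕ) = i then L * Real.sqrt (ζ i - ζ (i + 1)) else 0)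
    (hfv : ∀ i : ℕ, i ≤ N → fv i = L / 2 * (ζ i + ζ (i + 1))) {i : ℕ} (hi : i ≤ N) :
    fv i + ‖g i‖ ^ 2 / (2 * L) = L * ζ i := by
  rw [hfv i hi, wc_norm_sq_grad hζ hg hi]
  field_simp
  ring

lemma wc_value_sub_norm_sq (hL : 0 < L) (hζ : ∀ i j : ℕ, i < j → j ≤ N + 2 → ζ j < ζ i)
    (hζ0 : ζ (N + 2) = 0)
    (hg : ∀ i : ℕ, i ≤ N → ∀ j : Fin (N + 1),
      g i j = if (j : ℕ) = i then L * Real.sqrt (ζ i - ζ (i + 1)) else 0)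
    (hgN : g (N + 1) = 0) (hfv : ∀ i : ℕ, i ≤ N → fv i = L / 2 * (ζ i + ζ (i + 1)))
    (hfvN : fv (N + 1) = 0) {j : ℕ} (hj : j ≤ N + 1) :
    fv j - ‖g j‖ ^ 2 / (2 * L) = L * ζ (j + 1) := by
  obtain rfl | hj := eq_or_lt_of_le hj
  · simp [hfvN, hgN, hζ0]
  rw [hfv j (by omega), wc_norm_sq_grad hζ hg (by omega)]
  field_simp
  ring

end WorstCase

theorem wc_interpolation_inequality (N : ℕ) (L : ℝ) (hL : 0 < L) (ζ : ℕ → ℝ)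
    (hζ : ∀ i j : ℕ, i < j → j ≤ N + 2 → ζ j < ζ i) (hζ0 : ζ (N + 2) = 0)
    (x g : ℕ → EuclideanSpace ℝ (Fin (N + 1))) (fv : ℕ → ℝ)
    (hx : ∀ i : ℕ, i ≤ N + 1 → ∀ j : Fin (N + 1),
      x i j = if (j : ℕ) < i then -((ζ j - ζ (i + 1)) / Real.sqrt (ζ j - ζ (j + 1))) else 0)
    (hg : ∀ i : ℕ, i ≤ N → ∀ j : Fin (N + 1),
      g i j = if (j : ℕ) = i then L * Real.sqrt (ζ i - ζ (i + 1)) else 0)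
    (hgN : g (N + 1) = 0)
    (hfv : ∀ i : ℕ, i ≤ N → fv i = L / 2 * (ζ i + ζ (i + 1)))
    (hfvN : fv (N + 1) = 0) :
    ∀ i j : ℕ, i ≤ N + 1 → j ≤ N + 1 →
      1 / (2 * L) * ‖g i - g j‖ ^ 2 ≤ fv j - fv i - ⟪g i, x j - x i⟫ := by
  intro i j hi hj
  obtain rfl | hij := eq_or_ne i j
  · simp
  refine interpolation_of_inner_eq_zero (wc_inner_grad_grad hg hgN hi hj hij) ?_
  rw [wc_value_sub_norm_sq hL hζ hζ0 hg hgN hfv hfvN hj]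
  obtain rfl | hi := eq_or_lt_of_le hi
  · simpa [hgN, hfvN] using mul_nonneg hL.le (wc_nonneg hζ hζ0 (i := j + 1) (by omega))
  rw [wc_value_add_norm_sq hL hζ hg hfv (by omega), inner_sub_right,
    wc_inner_grad_point hζ hx hg (by omega) hj, wc_inner_grad_point hζ hx hg (by omega) hi.le, if_neg (lt_irrefl i)]
  split_ifs with hlt
  · linarith
  · simpa using mul_le_mul_of_nonneg_left (wc_antitone hζ (i := j + 1) (by omega) (by omega)) hL.le
end

section
/- Let L > 0 and let (x_i, g_i, f_i)_{i ∈ I} be a finite family in ℝ^d × ℝ^d × ℝ. Define W(y) := min over α in the unit simplex Δ_I and ν in a closed convex set C ∋ 0 of (L/2)‖y + ν − ∑_i α_i (x_i − g_i/L)‖² + ∑_i α_i (f_i − ‖g_i‖²/(2L)). If an index i satisfies P_C(−g_i/L) = 0 and (1/(2L))‖g_i − g_j‖² ≤ f_j − f_i − ⟨g_i, x_j − x_i⟩ for all j ∈ I, then W(x_i) = f_i, and the minimum in the definition of W(x_i) is attained at ν* = 0 and α* the indicator of i. -/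
open RealInnerProductSpace

theorem interpolating_function_value (d : ℕ) (L : ℝ) (hL : 0 < L)
    {ι : Type*} [Fintype ι] [DecidableEq ι]
    (x g : ι → EuclideanSpace ℝ (Fin d)) (fv : ι → ℝ)
    (C : Set (EuclideanSpace ℝ (Fin d)))
    (hCclosed : IsClosed C) (hCconv : Convex ℝ C) (hC0 : (0 : EuclideanSpace ℝ (Fin d)) ∈ C)
    (i : ι)
    (hproj : ∀ c ∈ C, ‖(-(1 / L) • g i) - 0‖ ≤ ‖(-(1 / L) • g i) - c‖)
    (hinterp : ∀ j : ι, 1 / (2 * L) * ‖g i - g j‖ ^ 2 ≤ fv j - fv i - ⟪g i, x j - x i⟫) :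
    IsLeast {v : ℝ | ∃ ν ∈ C, ∃ α : ι → ℝ, (∀ j, 0 ≤ α j) ∧ (∑ j, α j) = 1 ∧
        v = L / 2 * ‖x i + ν - ∑ j, α j • (x j - (1 / L) • g j)‖ ^ 2
            + ∑ j, α j * (fv j - ‖g j‖ ^ 2 / (2 * L))}
      (fv i) ∧
    L / 2 * ‖x i + (0 : EuclideanSpace ℝ (Fin d))
        - ∑ j, (if j = i then (1 : ℝ) else 0) • (x j - (1 / L) • g j)‖ ^ 2
      + ∑ j, (if j = i then (1 : ℝ) else 0) * (fv j - ‖g j‖ ^ 2 / (2 * L)) = fv i := by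
  have hL' : L ≠ 0 := ne_of_gt hL
  -- the value at the candidate minimizer
  have heq : L / 2 * ‖x i + (0 : EuclideanSpace ℝ (Fin d))
        - ∑ j, (if j = i then (1 : ℝ) else 0) • (x j - (1 / L) • g j)‖ ^ 2
      + ∑ j, (if j = i then (1 : ℝ) else 0) * (fv j - ‖g j‖ ^ 2 / (2 * L)) = fv i := by
    have h1 : (∑ j, (if j = i then (1:ℝ) else 0) • (x j - (1 / L) • g j))
        = x i - (1 / L) • g i := by
      simp [ite_smul, Finset.sum_ite_eq']
    have h2 : (∑ j, (if j = i then (1:ℝ) else 0) * (fv j - ‖g j‖ ^ 2 / (2 * L)))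
        = fv i - ‖g i‖ ^ 2 / (2 * L) := by
      simp [ite_mul, Finset.sum_ite_eq']
    rw [h1, h2]
    have h3 : x i + (0 : EuclideanSpace ℝ (Fin d)) - (x i - (1 / L) • g i)
        = (1 / L) • g i := by abel
    rw [h3, norm_smul, Real.norm_eq_abs, abs_of_pos (by positivity : (0:ℝ) < 1/L),
      mul_pow]
    field_simp
    ring
  -- inner product nonnegativity from the projection hypothesis
  have hgC : ∀ c ∈ C, 0 ≤ ⟪g i, c⟫ := by
    intro c hc
    by_contra h
    push_neg at h
    set v : EuclideanSpace ℝ (Fin d) := -(1 / L) • g i with hv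
    have hvc : 0 < ⟪v, c⟫ := by
      rw [hv, real_inner_smul_left]
      have h1L : 0 < 1 / L := by positivity
      nlinarith
    have hcne : c ≠ 0 := by
      rintro rfl; simp at hvc
    have hc0 : (0:ℝ) < ‖c‖ := norm_pos_iff.mpr hcne
    set t : ℝ := min 1 (⟪v, c⟫ / ‖c‖ ^ 2) with ht
    have ht0 : 0 < t := lt_min one_pos (div_pos hvc (by positivity))
    have ht1 : t ≤ 1 := min_le_left _ _
    have htc : t • c ∈ C := by
      have := hCconv hC0 hc (by linarith : (0:ℝ) ≤ 1 - t) ht0.le (by ring)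
      simpa using this
    have hp := hproj (t • c) htc
    rw [sub_zero] at hp
    have hsq : ‖v‖ ^ 2 ≤ ‖v - t • c‖ ^ 2 :=
      pow_le_pow_left₀ (norm_nonneg _) hp 2
    rw [norm_sub_sq_real, real_inner_smul_right] at hsq
    have hts : ‖t • c‖ ^ 2 = t ^ 2 * ‖c‖ ^ 2 := by
      rw [norm_smul, Real.norm_eq_abs, abs_of_pos ht0, mul_pow]
    rw [hts] at hsq
    have htle : t * ‖c‖ ^ 2 ≤ ⟪v, c⟫ :=
      (le_div_iff₀ (by positivity)).mp (min_le_right _ _)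
    nlinarith [mul_pos ht0 hvc, mul_le_mul_of_nonneg_left htle ht0.le]
  refine ⟨⟨⟨0, hC0, fun j => if j = i then 1 else 0, fun j => by positivity,
      by simp, heq.symm⟩, ?_⟩, heq⟩
  rintro v ⟨ν, hν, α, hα0, hα1, rfl⟩
  set S1 : EuclideanSpace ℝ (Fin d) := ∑ j, α j • x j with hS1
  set S2 : EuclideanSpace ℝ (Fin d) := ∑ j, α j • g j with hS2
  have hS : (∑ j, α j • (x j - (1 / L) • g j)) = S1 - (1 / L) • S2 := by
    rw [hS1, hS2, Finset.smul_sum, ← Finset.sum_sub_distrib]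
    refine Finset.sum_congr rfl fun j _ => ?_
    rw [smul_sub, smul_comm]
  set u : EuclideanSpace ℝ (Fin d) := x i + ν - ∑ j, α j • (x j - (1 / L) • g j) with hu
  -- step 1 : fv i ≤ sum of interpolation bounds
  have step1 : fv i ≤ ∑ j, α j * (fv j - ⟪g i, x j - x i⟫ - 1 / (2 * L) * ‖g i - g j‖ ^ 2) := by
    calc fv i = ∑ j, α j * fv i := by rw [← Finset.sum_mul, hα1, one_mul]
      _ ≤ _ := Finset.sum_le_sum fun j _ =>
          mul_le_mul_of_nonneg_left (by linarith [hinterp j]) (hα0 j)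
  -- rewrite the sum via inner products
  have e1 : ∑ j, α j * ⟪g i, x j⟫ = ⟪g i, S1⟫ := by
    rw [hS1, inner_sum]
    simp only [real_inner_smul_right]
  have e2 : ∑ j, α j * ⟪g i, g j⟫ = ⟪g i, S2⟫ := by
    rw [hS2, inner_sum]
    simp only [real_inner_smul_right]
  have hsum2 : ∑ j, α j * (fv j - ⟪g i, x j - x i⟫ - 1 / (2 * L) * ‖g i - g j‖ ^ 2)
      = (∑ j, α j * (fv j - ‖g j‖ ^ 2 / (2 * L))) - ⟪g i, S1⟫ + ⟪g i, x i⟫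
        - ‖g i‖ ^ 2 / (2 * L) + (1 / L) * ⟪g i, S2⟫ := by
    have expand : ∀ j, α j * (fv j - ⟪g i, x j - x i⟫ - 1 / (2 * L) * ‖g i - g j‖ ^ 2)
        = α j * (fv j - ‖g j‖ ^ 2 / (2 * L)) - α j * ⟪g i, x j⟫ + α j * ⟪g i, x i⟫
          - α j * (‖g i‖ ^ 2 / (2 * L)) + (1 / L) * (α j * ⟪g i, g j⟫) := by
      intro j
      rw [norm_sub_sq_real, inner_sub_right]
      field_simp
      ring
    rw [Finset.sum_congr rfl fun j _ => expand j]
    rw [Finset.sum_add_distrib, Finset.sum_sub_distrib, Finset.sum_add_distrib,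
      Finset.sum_sub_distrib, e1, ← Finset.mul_sum, e2, ← Finset.sum_mul, hα1,
      ← Finset.sum_mul, hα1]
    ring
  -- inner product of g i with u
  have hiu : ⟪g i, u⟫ = ⟪g i, x i⟫ + ⟪g i, ν⟫ - ⟪g i, S1⟫ + (1 / L) * ⟪g i, S2⟫ := by
    rw [hu, hS]
    rw [inner_sub_right, inner_add_right, inner_sub_right, real_inner_smul_right]
    ring
  have hgν : 0 ≤ ⟪g i, ν⟫ := hgC ν hν
  have hnn : 0 ≤ ‖u - (1 / L) • g i‖ ^ 2 := sq_nonneg _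
  have hexp : ‖u - (1 / L) • g i‖ ^ 2
      = ‖u‖ ^ 2 - 2 * ((1 / L) * ⟪g i, u⟫) + (1 / L) ^ 2 * ‖g i‖ ^ 2 := by
    rw [norm_sub_sq_real, real_inner_smul_right, real_inner_comm u (g i),
      norm_smul, Real.norm_eq_abs, abs_of_pos (by positivity : (0:ℝ) < 1/L), mul_pow]
  have hfin : fv i ≤ L / 2 * ‖u‖ ^ 2 + ∑ j, α j * (fv j - ‖g j‖ ^ 2 / (2 * L)) := by
    have h1 := step1
    rw [hsum2] at h1
    have h2 : 0 ≤ L / 2 * ‖u - (1 / L) • g i‖ ^ 2 + ⟪g i, ν⟫ := by positivity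
    rw [hexp] at h2
    have h3 : L / 2 * (‖u‖ ^ 2 - 2 * (1 / L * ⟪g i, u⟫) + (1 / L) ^ 2 * ‖g i‖ ^ 2)
        = L / 2 * ‖u‖ ^ 2 - ⟪g i, u⟫ + ‖g i‖ ^ 2 / (2 * L) := by
      field_simp
    rw [h3] at h2
    linarith [h1, h2, hiu]
  exact hfin
end

section
/- Let θ_0 = 1, θ_i = (1+√(1+4θ_{i-1}²))/2 for 1 ≤ i ≤ N−1, θ_N = (1+√(1+8θ_{N-1}²))/2, and R > 0. Define ζ_{N+2} = 0, ζ_{N+1} = (θ_N − 1)R²/(θ_N²(2θ_N − 1)), ζ_N = θ_N/(θ_N − 1)·ζ_{N+1}, and ζ_i = 2θ_i/(2θ_i − 1)·ζ_{i+1} for 0 ≤ i ≤ N−1. Then for all 0 ≤ j ≤ N−1, ζ_j θ_j = (ζ_N θ_N / 2) · ∏_{i=j}^{N-1} (2θ_{i+1} − 2)/(2θ_i − 1). -/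
theorem zeta_theta_product_identity (N : ℕ) (hN : 1 ≤ N) (R : ℝ) (hR : 0 < R)
    (θ ζ : ℕ → ℝ) (h0 : θ 0 = 1)
    (hrec : ∀ i : ℕ, 1 ≤ i → i < N → θ i = (1 + Real.sqrt (1 + 4 * θ (i - 1) ^ 2)) / 2)
    (hlast : θ N = (1 + Real.sqrt (1 + 8 * θ (N - 1) ^ 2)) / 2)
    (hζ2 : ζ (N + 2) = 0)
    (hζ1 : ζ (N + 1) = (θ N - 1) * R ^ 2 / (θ N ^ 2 * (2 * θ N - 1)))
    (hζN : ζ N = θ N / (θ N - 1) * ζ (N + 1))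
    (hζi : ∀ i : ℕ, i < N → ζ i = 2 * θ i / (2 * θ i - 1) * ζ (i + 1)) :
    ∀ j : ℕ, j < N →
      ζ j * θ j = ζ N * θ N / 2 * ∏ i ∈ Finset.Ico j N, (2 * θ (i + 1) - 2) / (2 * θ i - 1) := by
  intro j hj
  obtain ⟨d, hd⟩ : ∃ d, j + d + 1 = N := ⟨N - j - 1, by omega⟩
  induction d generalizing j with
  | zero =>
    -- j = N - 1
    have hjN : j + 1 = N := by omega
    have keyN : θ (j + 1) ^ 2 - θ (j + 1) = 2 * θ j ^ 2 := by
      have h := hlast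
      rw [← hjN] at h
      simp only [Nat.add_sub_cancel] at h
      have hs : Real.sqrt (1 + 8 * θ j ^ 2) ^ 2 = 1 + 8 * θ j ^ 2 :=
        Real.sq_sqrt (by positivity)
      rw [h]; linear_combination hs / 4
    rw [← hjN, Nat.Ico_succ_singleton, Finset.prod_singleton, hζi j hj]
    linear_combination (-ζ (j + 1) / (2 * θ j - 1)) * keyN
  | succ d ih =>
    have hj1 : j + 1 < N := by omega
    have IH := ih (j + 1) hj1 (by omega)
    have key : 2 * θ j ^ 2 = θ (j + 1) * (2 * θ (j + 1) - 2) := by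
      have h1 := hrec (j + 1) (by omega) hj1
      simp only [Nat.add_sub_cancel] at h1
      have hs : Real.sqrt (1 + 4 * θ j ^ 2) ^ 2 = 1 + 4 * θ j ^ 2 :=
        Real.sq_sqrt (by positivity)
      rw [h1]; linear_combination -hs / 2
    rw [Finset.prod_eq_prod_Ico_succ_bot hj, hζi j hj]
    linear_combination ((2 * θ (j + 1) - 2) / (2 * θ j - 1)) * IH
      + (ζ (j + 1) / (2 * θ j - 1)) * key
end

section
/- With θ and ζ = ζ* as in Definition 3.9 (parameters L, R > 0, N ≥ 1), the vector x_{N+1} := −∑_{j=0}^{N} ζ_j/√(ζ_j − ζ_{j+1}) · e_j ∈ ℝ^{N+1} satisfies ‖x_{N+1}‖² = ∑_{j=0}^{N} ζ_j²/(ζ_j − ζ_{j+1}) = R². -/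
/-!
Write `c_j = 2 θ_j` for `j < N` and `c_N = θ_N`, so that the recursion for `ζ` reads
`ζ_j = c_j / (c_j - 1) · ζ_{j+1}`. Since every `c_j > 1` and `ζ_{N+1} ≥ 0`, the sequence `ζ` is
nonnegative and nonincreasing on `0, …, N + 1`, so `x` is well defined and its squared norm is the
stated sum, whose terms simplify to `ζ_j^2 / (ζ_j - ζ_{j+1}) = c_j ζ_j`. The identities
`θ_j^2 - θ_j = θ_{j-1}^2` make the partial sums telescope, `∑_{j ≤ m} 2 θ_j ζ_j = 4 θ_m^2 ζ_{m+1}`,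
and the last step `θ_N^2 - θ_N = 2 θ_{N-1}^2` turns the whole sum into `θ_N (2 θ_N - 1) ζ_N = R^2`.
-/

open Finset

lemma sq_sub_self_of_eq_half_one_add_sqrt {t b : ℝ} (hb : 0 ≤ 1 + b)
    (ht : t = (1 + √(1 + b)) / 2) : t ^ 2 - t = b / 4 := by
  rw [ht]
  linear_combination Real.sq_sqrt hb / 4

lemma one_le_half_one_add_sqrt {b : ℝ} (hb : 0 ≤ b) : 1 ≤ (1 + √(1 + b)) / 2 := by
  have : 1 ≤ √(1 + b) := Real.one_le_sqrt.mpr (by linarith)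
  linarith

lemma one_lt_half_one_add_sqrt {b : ℝ} (hb : 0 < b) : 1 < (1 + √(1 + b)) / 2 := by
  have : 1 < √(1 + b) := (Real.lt_sqrt zero_le_one).mpr (by linarith)
  linarith

lemma sub_one_mul_eq_of_eq_div_sub_one_mul {a b c : ℝ} (hc : c ≠ 1) (h : a = c / (c - 1) * b) :
    (c - 1) * a = c * b := by
  rw [h]
  field_simp [sub_ne_zero.mpr hc]

lemma le_div_sub_one_mul_self {b c : ℝ} (hc : 1 < c) (hb : 0 ≤ b) : b ≤ c / (c - 1) * b :=
  le_mul_of_one_le_left hb ((one_le_div (by linarith)).mpr (by linarith))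

lemma sq_div_sub_eq_mul {a b c : ℝ} (hc : c ≠ 0) (h : (c - 1) * a = c * b) :
    a ^ 2 / (a - b) = c * a := by
  have hab : a - b = a / c := by
    rw [eq_div_iff hc]
    linear_combination h
  rcases eq_or_ne a 0 with rfl | ha
  · simp
  · rw [hab]
    field_simp

lemma nonneg_of_le_of_succ_le {f : ℕ → ℝ} {n : ℕ} (hn : 0 ≤ f n)
    (hstep : ∀ j < n, 0 ≤ f (j + 1) → f (j + 1) ≤ f j) {j : ℕ} (hj : j ≤ n) : 0 ≤ f j :=
  Nat.decreasingInduction (motive := fun m _ => 0 ≤ f m)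
    (fun k hk ih => ih.trans (hstep k hk ih)) hn hj

lemma EuclideanSpace.norm_sq_eq_sum_sq_div {n : ℕ} {a d : ℕ → ℝ} (hd : ∀ j < n, 0 ≤ d j)
    (x : EuclideanSpace ℝ (Fin n)) (hx : ∀ j : Fin n, x j = -(a j / √(d j))) :
    ‖x‖ ^ 2 = ∑ j ∈ range n, a j ^ 2 / d j := by
  rw [EuclideanSpace.real_norm_sq_eq, ← Fin.sum_univ_eq_sum_range]
  refine sum_congr rfl fun j _ => ?_
  rw [hx j, neg_sq, div_pow, Real.sq_sqrt (hd j j.isLt)]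

section Sequences

variable {θ ζ : ℕ → ℝ} {N : ℕ}

lemma one_le_of_eq_half_one_add_sqrt (h0 : θ 0 = 1)
    (hrec : ∀ i, 1 ≤ i → i < N → θ i = (1 + √(1 + 4 * θ (i - 1) ^ 2)) / 2) :
    ∀ i < N, 1 ≤ θ i := by
  intro i hi
  rcases Nat.eq_zero_or_pos i with rfl | hi0
  · exact h0.ge
  · exact (hrec i hi0 hi).symm ▸ one_le_half_one_add_sqrt (by positivity)

lemma sq_sub_self_succ_eq_sq
    (hrec : ∀ i, 1 ≤ i → i < N → θ i = (1 + √(1 + 4 * θ (i - 1) ^ 2)) / 2) :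
    ∀ m, m + 1 < N → θ (m + 1) ^ 2 - θ (m + 1) = θ m ^ 2 := by
  intro m hm
  have h := hrec (m + 1) (by omega) hm
  rw [Nat.add_sub_cancel] at h
  linear_combination sq_sub_self_of_eq_half_one_add_sqrt (by positivity) h

lemma sum_range_two_mul_mul_eq (h0 : θ 0 = 1)
    (hθ : ∀ m, m + 1 < N → θ (m + 1) ^ 2 - θ (m + 1) = θ m ^ 2)
    (hζ : ∀ i < N, (2 * θ i - 1) * ζ i = 2 * θ i * ζ (i + 1)) :
    ∀ m < N, ∑ j ∈ range (m + 1), 2 * θ j * ζ j = 4 * θ m ^ 2 * ζ (m + 1) := by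
  intro m
  induction m with
  | zero =>
    intro hN
    have h := hζ 0 hN
    rw [h0] at h
    rw [sum_range_one, h0]
    linear_combination 2 * h
  | succ m ih =>
    intro hm
    rw [sum_range_succ, ih (by omega)]
    linear_combination (-4 * ζ (m + 1)) * hθ m hm + 2 * θ (m + 1) * hζ (m + 1) hm


lemma sum_range_succ_sq_div_sub_eq (hN : 1 ≤ N) (h0 : θ 0 = 1) (hθ : ∀ i < N, θ i ≠ 0)
    (hθN : θ N ≠ 0) (hsq : ∀ m, m + 1 < N → θ (m + 1) ^ 2 - θ (m + 1) = θ m ^ 2)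
    (hsqN : θ N ^ 2 - θ N = 2 * θ (N - 1) ^ 2)
    (hζ : ∀ i < N, (2 * θ i - 1) * ζ i = 2 * θ i * ζ (i + 1))
    (hζN : (θ N - 1) * ζ N = θ N * ζ (N + 1)) :
    ∑ j ∈ range (N + 1), ζ j ^ 2 / (ζ j - ζ (j + 1)) = (2 * θ N - 1) * θ N * ζ N := by
  calc ∑ j ∈ range (N + 1), ζ j ^ 2 / (ζ j - ζ (j + 1))
      = ∑ j ∈ range N, 2 * θ j * ζ j + θ N * ζ N := by
        rw [sum_range_succ, sq_div_sub_eq_mul hθN hζN]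
        congr 1
        refine sum_congr rfl fun j hj => ?_
        have hj := mem_range.mp hj
        exact sq_div_sub_eq_mul (mul_ne_zero two_ne_zero (hθ j hj)) (hζ j hj)
    _ = 4 * θ (N - 1) ^ 2 * ζ N + θ N * ζ N := by
        obtain ⟨m, rfl⟩ := Nat.exists_eq_add_of_le' hN
        rw [sum_range_two_mul_mul_eq h0 hsq hζ m (by omega), Nat.add_sub_cancel]
    _ = (2 * θ N - 1) * θ N * ζ N := by linear_combination (-2 * ζ N) * hsqN

end Sequences

theorem xstar_norm_general (N : ℕ) (hN : 1 ≤ N) (R : ℝ)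
    (θ ζ : ℕ → ℝ) (h0 : θ 0 = 1)
    (hrec : ∀ i : ℕ, 1 ≤ i → i < N → θ i = (1 + Real.sqrt (1 + 4 * θ (i - 1) ^ 2)) / 2)
    (hlast : θ N = (1 + Real.sqrt (1 + 8 * θ (N - 1) ^ 2)) / 2)
    (hζ1 : ζ (N + 1) = (θ N - 1) * R ^ 2 / (θ N ^ 2 * (2 * θ N - 1)))
    (hζN : ζ N = θ N / (θ N - 1) * ζ (N + 1))
    (hζi : ∀ i : ℕ, i < N → ζ i = 2 * θ i / (2 * θ i - 1) * ζ (i + 1))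
    (x : EuclideanSpace ℝ (Fin (N + 1)))
    (hx : ∀ j : Fin (N + 1), x j = -(ζ j / Real.sqrt (ζ j - ζ (j + 1)))) :
    ‖x‖ ^ 2 = (∑ j ∈ Finset.range (N + 1), ζ j ^ 2 / (ζ j - ζ (j + 1))) ∧ ‖x‖ ^ 2 = R ^ 2 := by
  have hθ := one_le_of_eq_half_one_add_sqrt h0 hrec
  have hθN : 1 < θ N := by
    have := hθ (N - 1) (by omega)
    exact hlast ▸ one_lt_half_one_add_sqrt (by positivity)
  have hζ_le : ∀ j < N + 1, 0 ≤ ζ (j + 1) → ζ (j + 1) ≤ ζ j := by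
    intro j hj hζ
    rcases Nat.lt_succ_iff_lt_or_eq.mp hj with hj | rfl
    · exact (hζi j hj).symm ▸ le_div_sub_one_mul_self (by linarith [hθ j hj]) hζ
    · exact hζN.symm ▸ le_div_sub_one_mul_self hθN hζ
  have hζ_nonneg : ∀ j ≤ N + 1, 0 ≤ ζ j := fun j =>
    nonneg_of_le_of_succ_le (hζ1 ▸ div_nonneg (by nlinarith) (by nlinarith)) hζ_le
  have hnorm := EuclideanSpace.norm_sq_eq_sum_sq_div (a := ζ) (d := fun j => ζ j - ζ (j + 1))
    (fun j hj => sub_nonneg.mpr (hζ_le j hj (hζ_nonneg _ hj))) x hx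
  refine ⟨hnorm, hnorm.trans ?_⟩
  rw [sum_range_succ_sq_div_sub_eq hN h0 (fun i hi => by linarith [hθ i hi]) (by linarith)
    (sq_sub_self_succ_eq_sq hrec)
    (by linear_combination sq_sub_self_of_eq_half_one_add_sqrt (by positivity) hlast)
    (fun i hi => sub_one_mul_eq_of_eq_div_sub_one_mul (by linarith [hθ i hi]) (hζi i hi))
    (sub_one_mul_eq_of_eq_div_sub_one_mul hθN.ne' hζN)]
  have h1 : θ N - 1 ≠ 0 := by linarith
  have h2 : 2 * θ N - 1 ≠ 0 := by linarith
  rw [hζN, hζ1]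
  field_simp

theorem xstar_norm (N : ℕ) (hN : 1 ≤ N) (L R : ℝ) (hL : 0 < L) (hR : 0 < R)
    (θ ζ : ℕ → ℝ) (h0 : θ 0 = 1)
    (hrec : ∀ i : ℕ, 1 ≤ i → i < N → θ i = (1 + Real.sqrt (1 + 4 * θ (i - 1) ^ 2)) / 2)
    (hlast : θ N = (1 + Real.sqrt (1 + 8 * θ (N - 1) ^ 2)) / 2)
    (hζ2 : ζ (N + 2) = 0)
    (hζ1 : ζ (N + 1) = (θ N - 1) * R ^ 2 / (θ N ^ 2 * (2 * θ N - 1)))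
    (hζN : ζ N = θ N / (θ N - 1) * ζ (N + 1))
    (hζi : ∀ i : ℕ, i < N → ζ i = 2 * θ i / (2 * θ i - 1) * ζ (i + 1))
    (x : EuclideanSpace ℝ (Fin (N + 1)))
    (hx : ∀ j : Fin (N + 1), x j = -(ζ j / Real.sqrt (ζ j - ζ (j + 1)))) :
    ‖x‖ ^ 2 = (∑ j ∈ Finset.range (N + 1), ζ j ^ 2 / (ζ j - ζ (j + 1))) ∧ ‖x‖ ^ 2 = R ^ 2 :=
  xstar_norm_general N hN R θ ζ h0 hrec hlast hζ1 hζN hζi x hx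
end
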